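/- The genus-zero part of the polynomials T_n is T_n^{(0)} = u_0^{n+1}/(n+1)! for every n ≥ 0, where T_n^{(0)} denotes the result of setting λ = 0 in T_n. -/

import Mathlib

/-!
Setting `λ = 0` commutes with `∂ₓ`, so at `λ = 0` the Lenard recursion reads
`(2n+1) ∂ₓR⁰ₙ₊₁ = u₁R⁰ₙ + 2u₀∂ₓR⁰ₙ`, which `R⁰ₙ = u₀ⁿ/n!` solves because `u₀ ∂ₓ(u₀ⁿ) = n u₁u₀ⁿ`.
Hence `∂ₓT⁰ₙ = u₁u₀ⁿ/n! = ∂ₓ(u₀ⁿ⁺¹/(n+1)!)`. Both sides have zero constant term, and the kernel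
of `∂ₓ` consists of the constants: since `⁅∂/∂u_{N+1}, ∂ₓ⁆ = ∂/∂u_N`, a polynomial whose largest
variable is `u_N` satisfies `∂/∂u_{N+1} (∂ₓ f) = ∂f/∂u_N ≠ 0`.
-/

open MvPolynomial

/-- The derivation `∂ₓ = Σ_{k≥0} u_{k+1} ∂/∂u_k` on `A = ℝ[u₀, u₁, …]`
(the sum is finite on each polynomial). -/
noncomputable def dx (f : MvPolynomial ℕ ℝ) : MvPolynomial ℕ ℝ :=
  ∑ᶠ k : ℕ, X (k + 1) * pderiv k f

/-- The λ-linear extension of `∂ₓ` to `A[λ]` (acting on coefficients). -/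
noncomputable def dxP (p : Polynomial (MvPolynomial ℕ ℝ)) :
    Polynomial (MvPolynomial ℕ ℝ) :=
  p.sum fun n a => Polynomial.C (dx a) * Polynomial.X ^ n

/-- `p ∈ A[λ]` has zero constant term: the constant term (in the variables `u_k`)
of every `λ`-coefficient of `p` vanishes. -/
def NoConst (p : Polynomial (MvPolynomial ℕ ℝ)) : Prop :=
  ∀ i : ℕ, coeff 0 (p.coeff i) = 0

/-- `R : ℕ → A[λ]` is the sequence of Gelfand–Dickey polynomials:
`R 0 = 1`, each `R n` for `n ≥ 1` has zero constant term, and the Lenard recursion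
`(2n+1) ∂ₓ R_{n+1} = u₁ R_n + 2 u₀ ∂ₓ R_n + (λ²/4) ∂ₓ³ R_n` holds. -/
def IsGD (R : ℕ → Polynomial (MvPolynomial ℕ ℝ)) : Prop :=
  R 0 = 1 ∧ (∀ n : ℕ, 1 ≤ n → NoConst (R n)) ∧
  ∀ n : ℕ,
    Polynomial.C (MvPolynomial.C (2 * (n : ℝ) + 1)) * dxP (R (n + 1)) =
      Polynomial.C (X 1) * R n
      + Polynomial.C (MvPolynomial.C 2 * X 0) * dxP (R n)
      + Polynomial.C (MvPolynomial.C (1 / 4 : ℝ)) * Polynomial.X ^ 2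
          * dxP (dxP (dxP (R n)))

/-- `T : ℕ → A[λ]` is the sequence of antiderivatives: each `T n` has zero
constant term and `∂ₓ T_n = u₁ · R_n`. -/
def IsT (R T : ℕ → Polynomial (MvPolynomial ℕ ℝ)) : Prop :=
  ∀ n : ℕ, NoConst (T n) ∧ dxP (T n) = Polynomial.C (X 1) * R n

open scoped Nat

namespace MvPolynomial

variable {σ R : Type*}

theorem pderiv_ne_zero_of_mem_vars [CommSemiring R] [NoZeroDivisors R] [CharZero R]
    {f : MvPolynomial σ R} {i : σ} (hi : i ∈ f.vars) : pderiv i f ≠ 0 := by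
  classical
  obtain ⟨d, hd, hdi⟩ := (mem_vars_iff_mem_support i).mp hi
  have hle : Finsupp.single i 1 ≤ d :=
    Finsupp.single_le_iff.mpr (Nat.one_le_iff_ne_zero.mpr (Finsupp.mem_support_iff.mp hdi))
  intro h
  have hcoeff := coeff_pderiv (i := i) f (d - Finsupp.single i 1)
  rw [h, coeff_zero, tsub_add_cancel_of_le hle] at hcoeff
  exact mul_ne_zero (mem_support_iff.mp hd) (Nat.cast_add_one_ne_zero _) hcoeff.symm

noncomputable def totalDeriv (R : Type*) [CommSemiring R] :
    Derivation R (MvPolynomial ℕ R) (MvPolynomial ℕ R) :=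
  mkDerivation R fun k => X (k + 1)

theorem totalDeriv_C_mul [CommSemiring R] (a : R) (f : MvPolynomial ℕ R) :
    totalDeriv R (C a * f) = C a * totalDeriv R f := by
  rw [C_mul', Derivation.map_smul, smul_eq_C_mul, mul_comm]

@[simp]
theorem totalDeriv_X [CommSemiring R] (k : ℕ) : totalDeriv R (X k) = X (k + 1) :=
  mkDerivation_X _ _ _

theorem lie_pderiv_succ_totalDeriv [CommRing R] (i : ℕ) :
    ⁅(pderiv (i + 1) : Derivation R (MvPolynomial ℕ R) _), totalDeriv R⁆ = pderiv i := by
  classical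
  refine derivation_ext fun j => ?_
  simp [Derivation.commutator_apply, pderiv_X, Pi.single_apply, apply_ite (totalDeriv R)]

theorem eq_C_of_totalDeriv_eq_zero [CommRing R] [NoZeroDivisors R] [CharZero R]
    {f : MvPolynomial ℕ R} (hf : totalDeriv R f = 0) : f = C (f.coeff 0) := by
  rw [← vars_eq_empty_iff_eq_C, ← Finset.not_nonempty_iff_eq_empty]
  intro hne
  set N := f.vars.max' hne
  have hN : N + 1 ∉ f.vars := fun h => by have := f.vars.le_max' _ h; omega
  refine pderiv_ne_zero_of_mem_vars (f.vars.max'_mem hne) ?_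
  have := congrArg (· f) (lie_pderiv_succ_totalDeriv (R := R) N)
  simpa [Derivation.commutator_apply, hf, pderiv_eq_zero_of_notMem_vars hN] using this.symm

theorem eq_of_totalDeriv_eq [CommRing R] [NoZeroDivisors R] [CharZero R]
    {f g : MvPolynomial ℕ R} (h : totalDeriv R f = totalDeriv R g)
    (h0 : f.coeff 0 = g.coeff 0) : f = g := by
  have := eq_C_of_totalDeriv_eq_zero (f := f - g) (by rw [map_sub, h, sub_self])
  rwa [coeff_sub, h0, sub_self, C_0, sub_eq_zero] at this

theorem X_mul_totalDeriv_X_pow [CommSemiring R] (i n : ℕ) :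
    X i * totalDeriv R (X i ^ n) = (n : MvPolynomial ℕ R) * X (i + 1) * X i ^ n := by
  rw [Derivation.leibniz_pow, totalDeriv_X, nsmul_eq_mul, smul_eq_mul]
  cases n with
  | zero => simp
  | succ n => simp only [add_tsub_cancel_right, pow_succ]; ring

theorem totalDeriv_X_pow_succ [CommSemiring R] (i n : ℕ) :
    totalDeriv R (X i ^ (n + 1)) = ((n : MvPolynomial ℕ R) + 1) * X (i + 1) * X i ^ n := by
  rw [Derivation.leibniz_pow, totalDeriv_X, nsmul_eq_mul, smul_eq_mul, add_tsub_cancel_right]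
  push_cast; ring

end MvPolynomial

theorem dx_eq_totalDeriv (f : MvPolynomial ℕ ℝ) : dx f = totalDeriv ℝ f := by
  classical
  have hsum : dx f = ∑ k ∈ f.vars, X (k + 1) * pderiv k f :=
    finsum_eq_finsetSum_of_support_subset _ fun k hk => by
      by_contra hkv
      exact hk (by simp [pderiv_eq_zero_of_notMem_vars hkv])
  have happly : ∑ k ∈ f.vars, X (k + 1) * pderiv k f
      = (∑ k ∈ f.vars, (X (k + 1) : MvPolynomial ℕ ℝ) • pderiv k) f := by
    rw [← Derivation.coeFnAddMonoidHom_apply, map_sum, Finset.sum_apply]; rfl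
  rw [hsum, happly]
  refine derivation_eq_of_forall_mem_vars fun i hi => ?_
  rw [← Derivation.coeFnAddMonoidHom_apply, map_sum, Finset.sum_apply]
  simp [hi, pderiv_X, Pi.single_apply]

theorem eval_zero_dxP (p : Polynomial (MvPolynomial ℕ ℝ)) :
    (dxP p).eval 0 = totalDeriv ℝ (p.eval 0) := by
  simp only [← Polynomial.coeff_zero_eq_eval_zero, dxP, Polynomial.sum_def,
    Polynomial.finsetSum_coeff, Polynomial.coeff_C_mul_X_pow, dx_eq_totalDeriv]
  simp +contextual

theorem NoConst.coeff_zero_eval_zero {p : Polynomial (MvPolynomial ℕ ℝ)} (h : NoConst p) :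
    (p.eval 0).coeff 0 = 0 := by
  rw [← Polynomial.coeff_zero_eq_eval_zero]
  exact h 0

noncomputable def powDivFactorial (n : ℕ) : MvPolynomial ℕ ℝ :=
  C ((n ! : ℝ)⁻¹) * X 0 ^ n

theorem totalDeriv_powDivFactorial_succ (n : ℕ) :
    totalDeriv ℝ (powDivFactorial (n + 1)) = X 1 * powDivFactorial n := by
  have hfac : ((n + 1)! : ℝ)⁻¹ * (n + 1) = (n ! : ℝ)⁻¹ := by
    rw [Nat.factorial_succ, Nat.cast_mul, mul_inv, mul_comm, ← mul_assoc, Nat.cast_add_one,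
      mul_inv_cancel₀ (Nat.cast_add_one_ne_zero n), one_mul]
  rw [powDivFactorial, powDivFactorial, totalDeriv_C_mul, totalDeriv_X_pow_succ, ← hfac,
    C_mul, ← map_natCast C, ← C_1, ← C_add]
  ring

theorem X_zero_mul_totalDeriv_powDivFactorial (n : ℕ) :
    X 0 * totalDeriv ℝ (powDivFactorial n) = (n : MvPolynomial ℕ ℝ) * X 1 * powDivFactorial n := by
  rw [powDivFactorial, totalDeriv_C_mul, mul_left_comm, X_mul_totalDeriv_X_pow]
  ring

theorem coeff_zero_powDivFactorial_succ (n : ℕ) : (powDivFactorial (n + 1)).coeff 0 = 0 := by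
  rw [powDivFactorial, ← constantCoeff_eq]
  simp

theorem IsGD.eval_zero {R : ℕ → Polynomial (MvPolynomial ℕ ℝ)} (hR : IsGD R) (n : ℕ) :
    (R n).eval 0 = powDivFactorial n := by
  obtain ⟨hR0, hRnc, hrec⟩ := hR
  induction n with
  | zero => simp [hR0, powDivFactorial]
  | succ n ih =>
    have hlenard := congrArg (Polynomial.eval 0) (hrec n)
    simp only [Polynomial.eval_mul, Polynomial.eval_add, Polynomial.eval_C, Polynomial.eval_pow,
      Polynomial.eval_X, eval_zero_dxP, ih] at hlenard
    refine eq_of_totalDeriv_eq ?_ ((hRnc _ n.succ_pos).coeff_zero_eval_zero.trans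
      (coeff_zero_powDivFactorial_succ n).symm)
    have hC : (C (2 * (n : ℝ) + 1) : MvPolynomial ℕ ℝ) ≠ 0 := C_ne_zero.mpr (by positivity)
    refine mul_left_cancel₀ hC ?_
    rw [hlenard, totalDeriv_powDivFactorial_succ, mul_assoc (C 2),
      X_zero_mul_totalDeriv_powDivFactorial]
    simp only [ne_eq, OfNat.ofNat_ne_zero, not_false_eq_true, zero_pow, mul_zero, zero_mul,
      add_zero, map_add, map_mul, map_natCast, map_ofNat, C_1]
    ring

/-- the genus-zero part of `T_n` (setting `λ = 0`) is
`u₀^{n+1} / (n+1)!`. -/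
theorem T_genus_zero :
    ∀ R T : ℕ → Polynomial (MvPolynomial ℕ ℝ), IsGD R → IsT R T → ∀ n : ℕ,
      Polynomial.eval 0 (T n)
        = MvPolynomial.C (((n + 1).factorial : ℝ)⁻¹) * X 0 ^ (n + 1) := by
  intro R T hR hT n
  obtain ⟨hTnc, hTdx⟩ := hT n
  refine eq_of_totalDeriv_eq ?_
    (hTnc.coeff_zero_eval_zero.trans (coeff_zero_powDivFactorial_succ n).symm)
  have hdx := congrArg (Polynomial.eval 0) hTdx
  rw [eval_zero_dxP, Polynomial.eval_mul, Polynomial.eval_C, hR.eval_zero] at hdx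
  exact hdx.trans (totalDeriv_powDivFactorial_succ n).symm
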